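/- arXiv:2004.09071 — 2 statements merged into one kernel-verified Lean document; each statement's English description precedes it below -/
import Mathlib

section
/- Let f₁ : ℝ^m → ℝ be convex, f₂ : ℝ^d → ℝ convex and differentiable, B : ℝ^d → ℝ^m linear with adjoint Bᵀ, and let λ, γ > 0. Define h : ℝ^m → ℝ by h(x) = (λ/γ) f₁((γ/λ) x). Suppose x* ∈ ℝ^d and v* ∈ ℝ^m satisfy the fixed-point equations: with w = (λ/γ) B(x* − γ ∇f₂(x*)) + (I − λ B Bᵀ) v*, the point w − v* minimizes x ↦ h(x) + (1/2)‖x − w‖² over ℝ^m (i.e., v* = (I − Prox_h)(w)), and x* = x* − γ ∇f₂(x*) − γ Bᵀ v*. Then x* is a minimizer of x ↦ f₁(B x) + f₂(x) over ℝ^d. -/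
/-!
The fixed-point equation for `x*` says `∇f₂(x*) = -Bᵀv*`, and substituting this into `w` gives
`w - v* = (λ/γ) B x*`. Minimality of the proximal objective at `w - v*` makes `v* = w - (w - v*)`
a subgradient of the convex function `h` there, hence (undoing the scaling) of `f₁` at `B x*`.
So `Bᵀv*` is a subgradient of `f₁ ∘ B` at `x*`, while `-Bᵀv*` is the gradient of `f₂`, a
subgradient by convexity: `0` is a subgradient of `f₁ ∘ B + f₂` at `x*`.
-/

open scoped RealInnerProductSpace

open Filter Set Topology

lemma le_of_forall_le_add_mul {a b K : ℝ} (h : ∀ t : ℝ, 0 < t → t ≤ 1 → a ≤ b + t * K) :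
    a ≤ b := by
  have hlim : Tendsto (fun t : ℝ => b + t * K) (𝓝[>] 0) (𝓝 b) :=
    ((by fun_prop : Continuous fun t : ℝ => b + t * K).tendsto' 0 b (by simp)).mono_left
      nhdsWithin_le_nhds
  refine ge_of_tendsto hlim ?_
  filter_upwards [Ioc_mem_nhdsGT zero_lt_one] with t ht using h t ht.1 ht.2

section Subgradient

variable {E F : Type*} [NormedAddCommGroup E] [InnerProductSpace ℝ E]
  [NormedAddCommGroup F] [InnerProductSpace ℝ F]

def HasSubgradientAt (f : E → ℝ) (v x : E) : Prop :=
  ∀ y, ⟪v, y - x⟫ ≤ f y - f x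

lemma HasSubgradientAt.add {f g : E → ℝ} {v w x : E} (hf : HasSubgradientAt f v x)
    (hg : HasSubgradientAt g w x) : HasSubgradientAt (f + g) (v + w) x := fun y => by
  simp only [Pi.add_apply, inner_add_left]
  linarith [hf y, hg y]

lemma HasSubgradientAt.isMinOn_univ {f : E → ℝ} {x : E} (hf : HasSubgradientAt f 0 x) :
    IsMinOn f univ x := fun y _ => by
  simpa using hf y

lemma HasSubgradientAt.comp_adjoint [CompleteSpace E] [CompleteSpace F] {f : F → ℝ}
    {v : F} {x : E} (B : E →L[ℝ] F) (hf : HasSubgradientAt f v (B x)) :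
    HasSubgradientAt (f ∘ B) (ContinuousLinearMap.adjoint B v) x := fun y => by
  simpa [ContinuousLinearMap.adjoint_inner_left] using hf (B y)

lemma HasSubgradientAt.of_perspective {f : E → ℝ} {v y : E} {c : ℝ} (hc : 0 < c)
    (hf : HasSubgradientAt (fun x => c * f (c⁻¹ • x)) v (c • y)) :
    HasSubgradientAt f v y := fun z => by
  have hz := hf (c • z)
  simp only [← smul_sub, real_inner_smul_right, inv_smul_smul₀ hc.ne', ← mul_sub] at hz
  exact le_of_mul_le_mul_left hz hc

lemma ConvexOn.perspective {f : E → ℝ} (hf : ConvexOn ℝ univ f) {c : ℝ} (hc : 0 ≤ c) :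
    ConvexOn ℝ univ (fun x => c * f (c⁻¹ • x)) := by
  have hscaled := (hf.comp_linearMap (c⁻¹ • LinearMap.id : E →ₗ[ℝ] E)).smul hc
  exact hscaled

lemma ConvexOn.hasSubgradientAt_gradient [CompleteSpace E] {f : E → ℝ}
    (hf : ConvexOn ℝ univ f) {x : E} (hfx : DifferentiableAt ℝ f x) :
    HasSubgradientAt f (gradient f x) x := fun y => by
  let line : ℝ →ᵃ[ℝ] E := AffineMap.lineMap x y
  have hderiv : HasDerivAt (f ∘ line) ⟪gradient f x, y - x⟫ 0 := by
    have hgrad : HasFDerivAt f (InnerProductSpace.toDual ℝ E (gradient f x)) (line 0) := by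
      simpa [line] using hfx.hasGradientAt.hasFDerivAt
    exact hgrad.comp_hasDerivAt 0 AffineMap.hasDerivAt_lineMap
  simpa [slope_def_field, line] using
    (hf.comp_affineMap line).le_slope_of_hasDerivAt (mem_univ 0) (mem_univ 1) zero_lt_one hderiv

/-- Compare `u` with `u + t • (x - u)`: convexity of `h` makes the first-order terms in `t`
give the subgradient inequality, up to the `t²` term of the quadratic, and `t → 0⁺` removes it. -/
lemma ConvexOn.hasSubgradientAt_of_isMinOn_prox {h : E → ℝ} (hh : ConvexOn ℝ univ h) {u w : E}
    (hu : IsMinOn (fun x => h x + 1 / 2 * ‖x - w‖ ^ 2) univ u) :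
    HasSubgradientAt h (w - u) u := fun x => by
  refine le_of_forall_le_add_mul (K := 1 / 2 * ‖x - u‖ ^ 2) fun t ht₀ ht₁ => ?_
  have hmin : h u + 1 / 2 * ‖u - w‖ ^ 2
      ≤ h (u + t • (x - u)) + 1 / 2 * ‖u + t • (x - u) - w‖ ^ 2 := hu (mem_univ _)
  have hconv : h (u + t • (x - u)) ≤ (1 - t) * h u + t * h x := by
    have := hh.2 (mem_univ u) (mem_univ x) (sub_nonneg.2 ht₁) ht₀.le (sub_add_cancel 1 t)
    rwa [smul_eq_mul, smul_eq_mul, show (1 - t) • u + t • x = u + t • (x - u) by module] at this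
  have hexpand : ‖u + t • (x - u) - w‖ ^ 2
      = ‖u - w‖ ^ 2 - 2 * t * ⟪w - u, x - u⟫ + t ^ 2 * ‖x - u‖ ^ 2 := by
    rw [show u + t • (x - u) - w = (u - w) + t • (x - u) by abel, norm_add_sq_real,
      real_inner_smul_right, norm_smul, Real.norm_eq_abs, abs_of_pos ht₀, mul_pow,
      ← neg_sub w u, inner_neg_left]
    ring
  rw [hexpand] at hmin
  have key : t * ⟪w - u, x - u⟫ ≤ t * (h x - h u + t * (1 / 2 * ‖x - u‖ ^ 2)) := by
    nlinarith
  exact le_of_mul_le_mul_left key ht₀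

end Subgradient

theorem stmt10 (m d : ℕ)
    (f₁ : EuclideanSpace ℝ (Fin m) → ℝ) (hf₁ : ConvexOn ℝ Set.univ f₁)
    (f₂ : EuclideanSpace ℝ (Fin d) → ℝ) (hf₂conv : ConvexOn ℝ Set.univ f₂)
    (hf₂ : Differentiable ℝ f₂)
    (B : EuclideanSpace ℝ (Fin d) →L[ℝ] EuclideanSpace ℝ (Fin m))
    (lam γ : ℝ) (hlam : 0 < lam) (hγ : 0 < γ)
    (h : EuclideanSpace ℝ (Fin m) → ℝ)
    (hh : ∀ x, h x = (lam / γ) * f₁ ((γ / lam) • x))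
    (xs : EuclideanSpace ℝ (Fin d)) (vs : EuclideanSpace ℝ (Fin m))
    (w : EuclideanSpace ℝ (Fin m))
    (hw : w = (lam / γ) • B (xs - γ • gradient f₂ xs) +
      (vs - lam • B (ContinuousLinearMap.adjoint B vs)))
    (hprox : ∀ x, h (w - vs) + (1 / 2) * ‖(w - vs) - w‖ ^ 2 ≤ h x + (1 / 2) * ‖x - w‖ ^ 2)
    (hfix : xs = xs - γ • gradient f₂ xs - γ • ContinuousLinearMap.adjoint B vs) :
    ∀ x : EuclideanSpace ℝ (Fin d), f₁ (B xs) + f₂ xs ≤ f₁ (B x) + f₂ x := by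
  have hgrad : gradient f₂ xs = -ContinuousLinearMap.adjoint B vs := by
    rw [sub_sub, eq_comm, sub_eq_self, ← smul_add, smul_eq_zero] at hfix
    exact eq_neg_of_add_eq_zero_left (hfix.resolve_left hγ.ne')
  have hscaled : w - vs = (lam / γ) • B xs := by
    rw [hw, hgrad]
    simp only [map_sub, map_smul, map_neg, smul_sub, smul_neg, smul_smul,
      div_mul_cancel₀ lam hγ.ne']
    abel
  have hc : 0 < lam / γ := div_pos hlam hγ
  have hh' : h = fun x => (lam / γ) * f₁ ((lam / γ)⁻¹ • x) :=
    funext fun x => by rw [hh, inv_div]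
  have hprox_sub : HasSubgradientAt h vs (w - vs) := by
    have hconv : ConvexOn ℝ univ h := hh' ▸ hf₁.perspective hc.le
    simpa using hconv.hasSubgradientAt_of_isMinOn_prox (u := w - vs) fun x _ => hprox x
  rw [hh', hscaled] at hprox_sub
  have hsum := ((hprox_sub.of_perspective hc).comp_adjoint B).add
    (hgrad ▸ hf₂conv.hasSubgradientAt_gradient (hf₂ xs))
  rw [add_neg_cancel] at hsum
  exact fun x => hsum.isMinOn_univ (mem_univ x)
end

section
/- Let f₁ : ℝ^m → ℝ be convex, let B : ℝ^d → ℝ^m be linear with adjoint Bᵀ, and let λ > 0, ρ ≥ 0 satisfy λ‖Bᵀ v‖² ≤ ‖v‖² and ρ‖v‖² ≤ ‖Bᵀ v‖² for all v ∈ ℝ^m, with λρ ≤ 1. Let γ, γ' be positive reals with γ' ≤ γ, and define h : ℝ^m → ℝ by h(x) = (λ/γ) f₁((γ/λ) x). Let g₁, g₂ ∈ ℝ^d and let x_old ∈ ℝ^d, v_old, v* ∈ ℝ^m. Define w₁ = (λ/γ) B g₁ + (I − λ B Bᵀ) v_old and w₂ = (λ/γ) B g₂ + (I − λ B Bᵀ)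 v*, and suppose p₁ minimizes x ↦ h(x) + (1/2)‖x − w₁‖² and p₂ minimizes x ↦ h(x) + (1/2)‖x − w₂‖² over ℝ^m. Set v_new = w₁ − p₁, x_new = g₁ − γ Bᵀ v_new, and suppose moreover that v* = w₂ − p₂ and x* := g₂ − γ Bᵀ v*. Then ‖x_new − x*‖² + (γ'²/λ)‖v_new − v*‖² ≤ ‖g₁ − g₂‖² + (γ²/λ)(1 − λρ)‖v_old − v*‖². -/
/-!
Since `h` is convex, `p = Prox_h(w)` means that `w - p` is a subgradient of `h` at `p`;
monotonicity of the subdifferential then makes `I - Prox_h` firmly nonexpansive: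
`‖Δv‖² ≤ ⟪Δv, w₁ - w₂⟫` for `Δv = v_new - v*`. Expanding `w₁ - w₂` and `x_new - x*`, the
estimate is this inequality plus `λ‖Bᵀ(Δv - Δv_old)‖² ≤ ‖Δv - Δv_old‖²` and
`ρ‖Δv_old‖² ≤ ‖BᵀΔv_old‖²`, with `Δv_old = v_old - v*`.
-/

open Set Filter Topology
open scoped RealInnerProductSpace

lemma le_of_forall_mem_Ioc_le_add_mul {a b c : ℝ} (h : ∀ t ∈ Ioc (0 : ℝ) 1, a ≤ b + t * c) :
    a ≤ b := by
  have hlim : Tendsto (fun t : ℝ => b + t * c) (𝓝[>] 0) (𝓝 b) := by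
    have : Continuous fun t : ℝ => b + t * c := by fun_prop
    simpa using (this.tendsto 0).mono_left nhdsWithin_le_nhds
  exact ge_of_tendsto hlim (eventually_of_mem (Ioc_mem_nhdsGT one_pos) h)

section Prox

variable {E : Type*} [NormedAddCommGroup E] [InnerProductSpace ℝ E]

def IsProx (f : E → ℝ) (w p : E) : Prop :=
  ∀ x, f p + (1 / 2) * ‖p - w‖ ^ 2 ≤ f x + (1 / 2) * ‖x - w‖ ^ 2

variable {f : E → ℝ} {w p w₁ p₁ w₂ p₂ : E}

theorem IsProx.inner_le_sub (hf : ConvexOn ℝ univ f) (hp : IsProx f w p) (x : E) :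
    ⟪w - p, x - p⟫ ≤ f x - f p := by
  -- compare `p` with `(1 - t) • p + t • x`, divide by `t` and let `t → 0⁺`
  refine le_of_forall_mem_Ioc_le_add_mul (c := ‖x - p‖ ^ 2 / 2) fun t ⟨ht₀, ht₁⟩ => ?_
  have hmin := hp ((1 - t) • p + t • x)
  have hconv := hf.2 (mem_univ p) (mem_univ x) (sub_nonneg.2 ht₁) ht₀.le (sub_add_cancel 1 t)
  have hsq : ‖(1 - t) • p + t • x - w‖ ^ 2
      = ‖p - w‖ ^ 2 - 2 * t * ⟪w - p, x - p⟫ + t ^ 2 * ‖x - p‖ ^ 2 := by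
    have : (1 - t) • p + t • x - w = (p - w) + t • (x - p) := by
      rw [smul_sub, sub_smul, one_smul]; abel
    rw [this, norm_add_sq_real, real_inner_smul_right, norm_smul, Real.norm_of_nonneg ht₀.le,
      ← neg_sub w p, inner_neg_left]
    ring
  rw [hsq] at hmin
  simp only [smul_eq_mul] at hconv
  refine le_of_mul_le_mul_left ?_ ht₀
  linarith

theorem IsProx.norm_sub_sq_le_inner (hf : ConvexOn ℝ univ f) (hp₁ : IsProx f w₁ p₁)
    (hp₂ : IsProx f w₂ p₂) :
    ‖(w₁ - p₁) - (w₂ - p₂)‖ ^ 2 ≤ ⟪(w₁ - p₁) - (w₂ - p₂), w₁ - w₂⟫ := by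
  have hmono : 0 ≤ ⟪(w₁ - p₁) - (w₂ - p₂), p₁ - p₂⟫ := by
    have h₁ := hp₁.inner_le_sub hf p₂
    have h₂ := hp₂.inner_le_sub hf p₁
    rw [← neg_sub p₁ p₂, inner_neg_right] at h₁
    rw [inner_sub_left]
    linarith
  have hw : w₁ - w₂ = ((w₁ - p₁) - (w₂ - p₂)) + (p₁ - p₂) := by abel
  rw [hw, inner_add_right, real_inner_self_eq_norm_sq]
  linarith

end Prox

section Step

variable {E F : Type*} [NormedAddCommGroup E] [InnerProductSpace ℝ E] [CompleteSpace E]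
  [NormedAddCommGroup F] [InnerProductSpace ℝ F] [CompleteSpace F]

open ContinuousLinearMap in
theorem norm_sub_smul_adjoint_sq_add_le {lam ρ γ : ℝ} (hlam : 0 < lam) (hγ : 0 < γ)
    (B : E →L[ℝ] F) {g : E} {v u : F}
    (hfirm : ‖v‖ ^ 2 ≤ ⟪v, (lam / γ) • B g + (u - lam • B (adjoint B u))⟫)
    (hB₁ : lam * ‖adjoint B (v - u)‖ ^ 2 ≤ ‖v - u‖ ^ 2)
    (hB₂ : ρ * ‖u‖ ^ 2 ≤ ‖adjoint B u‖ ^ 2) :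
    ‖g - γ • adjoint B v‖ ^ 2 + γ ^ 2 / lam * ‖v‖ ^ 2 ≤
      ‖g‖ ^ 2 + γ ^ 2 / lam * (1 - lam * ρ) * ‖u‖ ^ 2 := by
  rw [inner_add_right, inner_sub_right, real_inner_smul_right, real_inner_smul_right,
    ← adjoint_inner_left, ← adjoint_inner_left] at hfirm
  rw [map_sub, norm_sub_sq_real, norm_sub_sq_real] at hB₁
  rw [norm_sub_sq_real, real_inner_smul_right, norm_smul, Real.norm_of_nonneg hγ.le, mul_pow,
    real_inner_comm]
  rw [← mul_le_mul_iff_right₀ hlam]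
  field_simp at hfirm ⊢
  linear_combination 2 * γ * hfirm + γ ^ 2 * hB₁ + lam * γ ^ 2 * hB₂

end Step

theorem stmt11_general (m d : ℕ)
    (f₁ : EuclideanSpace ℝ (Fin m) → ℝ) (hf₁ : ConvexOn ℝ Set.univ f₁)
    (B : EuclideanSpace ℝ (Fin d) →L[ℝ] EuclideanSpace ℝ (Fin m))
    (lam ρ : ℝ) (hlam : 0 < lam)
    (hB1 : ∀ v : EuclideanSpace ℝ (Fin m),
      lam * ‖ContinuousLinearMap.adjoint B v‖ ^ 2 ≤ ‖v‖ ^ 2)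
    (hB2 : ∀ v : EuclideanSpace ℝ (Fin m),
      ρ * ‖v‖ ^ 2 ≤ ‖ContinuousLinearMap.adjoint B v‖ ^ 2)
    (γ γ' : ℝ) (hγ'pos : 0 < γ') (hγ' : γ' ≤ γ)
    (h : EuclideanSpace ℝ (Fin m) → ℝ)
    (hh : ∀ x, h x = (lam / γ) * f₁ ((γ / lam) • x))
    (g₁ g₂ : EuclideanSpace ℝ (Fin d))
    (v_old vs : EuclideanSpace ℝ (Fin m))
    (w₁ w₂ : EuclideanSpace ℝ (Fin m))
    (hw₁ : w₁ = (lam / γ) • B g₁ + (v_old - lam • B (ContinuousLinearMap.adjoint B v_old)))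
    (hw₂ : w₂ = (lam / γ) • B g₂ + (vs - lam • B (ContinuousLinearMap.adjoint B vs)))
    (p₁ p₂ : EuclideanSpace ℝ (Fin m))
    (hp₁ : ∀ x, h p₁ + (1 / 2) * ‖p₁ - w₁‖ ^ 2 ≤ h x + (1 / 2) * ‖x - w₁‖ ^ 2)
    (hp₂ : ∀ x, h p₂ + (1 / 2) * ‖p₂ - w₂‖ ^ 2 ≤ h x + (1 / 2) * ‖x - w₂‖ ^ 2)
    (v_new : EuclideanSpace ℝ (Fin m)) (hv_new : v_new = w₁ - p₁)
    (x_new : EuclideanSpace ℝ (Fin d))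
    (hx_new : x_new = g₁ - γ • ContinuousLinearMap.adjoint B v_new)
    (hvs : vs = w₂ - p₂)
    (xs : EuclideanSpace ℝ (Fin d))
    (hxs : xs = g₂ - γ • ContinuousLinearMap.adjoint B vs) :
    ‖x_new - xs‖ ^ 2 + (γ' ^ 2 / lam) * ‖v_new - vs‖ ^ 2 ≤
      ‖g₁ - g₂‖ ^ 2 + (γ ^ 2 / lam) * (1 - lam * ρ) * ‖v_old - vs‖ ^ 2 := by
  have hγ : 0 < γ := hγ'pos.trans_le hγ'
  have hconv : ConvexOn ℝ univ h := by
    have := (hf₁.comp_linearMap ((γ / lam) • LinearMap.id)).smul (div_pos hlam hγ).le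
    simpa [funext hh] using this
  have hfirm := IsProx.norm_sub_sq_le_inner hconv hp₁ hp₂
  have hw : w₁ - w₂ = (lam / γ) • B (g₁ - g₂) +
      ((v_old - vs) - lam • B (ContinuousLinearMap.adjoint B (v_old - vs))) := by
    rw [hw₁, hw₂]; simp only [map_sub, smul_sub]; abel
  have hx : x_new - xs = (g₁ - g₂) - γ • ContinuousLinearMap.adjoint B (v_new - vs) := by
    rw [hx_new, hxs, map_sub, smul_sub]; abel
  rw [← hv_new, ← hvs, hw] at hfirm
  calc ‖x_new - xs‖ ^ 2 + (γ' ^ 2 / lam) * ‖v_new - vs‖ ^ 2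
      ≤ ‖x_new - xs‖ ^ 2 + (γ ^ 2 / lam) * ‖v_new - vs‖ ^ 2 := by gcongr
    _ ≤ _ := hx ▸ norm_sub_smul_adjoint_sq_add_le hlam hγ B hfirm (hB1 _) (hB2 _)

theorem stmt11 (m d : ℕ)
    (f₁ : EuclideanSpace ℝ (Fin m) → ℝ) (hf₁ : ConvexOn ℝ Set.univ f₁)
    (B : EuclideanSpace ℝ (Fin d) →L[ℝ] EuclideanSpace ℝ (Fin m))
    (lam ρ : ℝ) (hlam : 0 < lam) (hρ : 0 ≤ ρ)
    (hB1 : ∀ v : EuclideanSpace ℝ (Fin m),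
      lam * ‖ContinuousLinearMap.adjoint B v‖ ^ 2 ≤ ‖v‖ ^ 2)
    (hB2 : ∀ v : EuclideanSpace ℝ (Fin m),
      ρ * ‖v‖ ^ 2 ≤ ‖ContinuousLinearMap.adjoint B v‖ ^ 2)
    (hlamρ : lam * ρ ≤ 1)
    (γ γ' : ℝ) (hγ : 0 < γ) (hγ'pos : 0 < γ') (hγ' : γ' ≤ γ)
    (h : EuclideanSpace ℝ (Fin m) → ℝ)
    (hh : ∀ x, h x = (lam / γ) * f₁ ((γ / lam) • x))
    (g₁ g₂ x_old : EuclideanSpace ℝ (Fin d))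
    (v_old vs : EuclideanSpace ℝ (Fin m))
    (w₁ w₂ : EuclideanSpace ℝ (Fin m))
    (hw₁ : w₁ = (lam / γ) • B g₁ + (v_old - lam • B (ContinuousLinearMap.adjoint B v_old)))
    (hw₂ : w₂ = (lam / γ) • B g₂ + (vs - lam • B (ContinuousLinearMap.adjoint B vs)))
    (p₁ p₂ : EuclideanSpace ℝ (Fin m))
    (hp₁ : ∀ x, h p₁ + (1 / 2) * ‖p₁ - w₁‖ ^ 2 ≤ h x + (1 / 2) * ‖x - w₁‖ ^ 2)
    (hp₂ : ∀ x, h p₂ + (1 / 2) * ‖p₂ - w₂‖ ^ 2 ≤ h x + (1 / 2) * ‖x - w₂‖ ^ 2)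
    (v_new : EuclideanSpace ℝ (Fin m)) (hv_new : v_new = w₁ - p₁)
    (x_new : EuclideanSpace ℝ (Fin d))
    (hx_new : x_new = g₁ - γ • ContinuousLinearMap.adjoint B v_new)
    (hvs : vs = w₂ - p₂)
    (xs : EuclideanSpace ℝ (Fin d))
    (hxs : xs = g₂ - γ • ContinuousLinearMap.adjoint B vs) :
    ‖x_new - xs‖ ^ 2 + (γ' ^ 2 / lam) * ‖v_new - vs‖ ^ 2 ≤
      ‖g₁ - g₂‖ ^ 2 + (γ ^ 2 / lam) * (1 - lam * ρ) * ‖v_old - vs‖ ^ 2 :=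
  stmt11_general m d f₁ hf₁ B lam ρ hlam hB1 hB2 γ γ' hγ'pos hγ' h hh g₁ g₂ v_old vs w₁ w₂ hw₁ hw₂
    p₁ p₂ hp₁ hp₂ v_new hv_new x_new hx_new hvs xs hxs
end
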